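/- arXiv:1802.02686 — 2 statements merged into one kernel-verified Lean document; each statement's English description precedes it below -/
import Mathlib

section
/- Moving a single monomer m from polymer p₁ to polymer p₂ by breaking all of m's binding edges in p₁ and forming an equal number of binding edges with monomers of p₂ leaves the enthalpy unchanged and changes the entropy by at most 1 in absolute value, provided p₁ remains connected after removing m. -/
/-!
Away from `m` the two configurations agree, so deleting the edges at `m` leaves the same graph;
as `m` has the same degree in both, they have the same number of edges.

If `H` contains the edges of `G` away from `m` and all `G`-neighbours of `m` lie in one
component of `H`, then the components of `G` map to those of `H` compatibly with every vertex
other than `m`, and every component of `H` except possibly that of `m` is hit, so `H` has at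
most one more component than `G`. This applies from `α` to `β` because the new partners of `m`
all lie in `p₂`, and from `β` to `α` because the old partners of `m` lie in `p₁ \ {m}`, which
stays connected in `α`.
-/

open Finset

namespace SimpleGraph

variable {V : Type*} {G H : SimpleGraph V}

theorem card_edgeFinset_eq_of_adj_iff_of_degree_eq [Fintype V] [DecidableEq V]
    [DecidableRel G.Adj] [DecidableRel H.Adj] (m : V)
    (hadj : ∀ x y, x ≠ m → y ≠ m → (G.Adj x y ↔ H.Adj x y)) (hdeg : G.degree m = H.degree m) :
    G.edgeFinset.card = H.edgeFinset.card := by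
  have hdel : G.deleteIncidenceSet m = H.deleteIncidenceSet m := by
    ext x y
    simp only [deleteIncidenceSet_adj]
    exact and_congr_left fun ⟨hx, hy⟩ => hadj x y hx hy
  have hG : #(H.deleteIncidenceSet m).edgeFinset = #G.edgeFinset - G.degree m := by
    convert G.card_edgeFinset_deleteIncidenceSet m using 3
    exact hdel.symm
  have hH := H.card_edgeFinset_deleteIncidenceSet m
  have := G.degree_le_card_edgeFinset m
  have := H.degree_le_card_edgeFinset m
  omega

theorem Reachable.eq_of_forall_adj {β : Sort*} {f : V → β}
    (hf : ∀ x y, G.Adj x y → f x = f y) {u v : V} (h : G.Reachable u v) : f u = f v := by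
  obtain ⟨p⟩ := h
  induction p with
  | nil => rfl
  | cons hadj _ ih => exact (hf _ _ hadj).trans ih

theorem exists_connectedComponent_map_of_forall_adj_eq (m : V) (c : H.ConnectedComponent)
    (hadj : ∀ x y, x ≠ m → y ≠ m → G.Adj x y → H.Adj x y)
    (hc : ∀ x, G.Adj m x → H.connectedComponentMk x = c) :
    ∃ φ : G.ConnectedComponent → H.ConnectedComponent,
      ∀ x, x ≠ m → φ (G.connectedComponentMk x) = H.connectedComponentMk x := by
  classical
  let f := Function.update H.connectedComponentMk m c
  have hf : ∀ x y, G.Adj x y → f x = f y := by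
    intro x y hxy
    by_cases hx : x = m
    · subst hx
      simp [f, hxy.ne', hc y hxy]
    by_cases hy : y = m
    · subst hy
      simp [f, hxy.ne, hc x hxy.symm]
    simpa [f, hx, hy] using ConnectedComponent.connectedComponentMk_eq_of_adj (hadj x y hx hy hxy)
  refine ⟨ConnectedComponent.lift f fun v w p _ => p.reachable.eq_of_forall_adj hf, ?_⟩
  intro x hx
  simp [f, hx]

theorem card_connectedComponent_le_card_add_one [Fintype G.ConnectedComponent]
    [Fintype H.ConnectedComponent] (m : V) (c : H.ConnectedComponent)
    (hadj : ∀ x y, x ≠ m → y ≠ m → G.Adj x y → H.Adj x y)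
    (hc : ∀ x, G.Adj m x → H.connectedComponentMk x = c) :
    Fintype.card H.ConnectedComponent ≤ Fintype.card G.ConnectedComponent + 1 := by
  obtain ⟨φ, hφ⟩ := exists_connectedComponent_map_of_forall_adj_eq m c hadj hc
  have hsurj : Function.Surjective fun o : Option G.ConnectedComponent =>
      o.elim (H.connectedComponentMk m) φ := by
    refine ConnectedComponent.ind fun x => ?_
    by_cases hx : x = m
    · exact ⟨none, by simp [hx]⟩
    · exact ⟨some (G.connectedComponentMk x), hφ x hx⟩
  simpa using Fintype.card_le_of_surjective _ hsurj

theorem exists_forall_adj_connectedComponentMk_eq (m : V)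
    (hconn : (G.induce {x : V | G.connectedComponentMk x = G.connectedComponentMk m ∧
      x ≠ m}).Preconnected)
    (hadj : ∀ x y, x ≠ m → y ≠ m → G.Adj x y → H.Adj x y) :
    ∃ c : H.ConnectedComponent, ∀ x, G.Adj m x → H.connectedComponentMk x = c := by
  by_cases hm : ∃ n, G.Adj m n
  · obtain ⟨n, hn⟩ := hm
    refine ⟨H.connectedComponentMk n, fun x hx => ConnectedComponent.sound ?_⟩
    let ι : G.induce {x | G.connectedComponentMk x = G.connectedComponentMk m ∧ x ≠ m} →g H :=
      ⟨Subtype.val, fun {a b} hab => hadj a b a.2.2 b.2.2 hab⟩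
    exact (hconn ⟨x, (ConnectedComponent.connectedComponentMk_eq_of_adj hx).symm, hx.ne'⟩
      ⟨n, (ConnectedComponent.connectedComponentMk_eq_of_adj hn).symm, hn.ne'⟩).map ι
  · push Not at hm
    exact ⟨H.connectedComponentMk m, fun x hx => (hm x hx).elim⟩

end SimpleGraph

open SimpleGraph in
/-- Moving a single monomer `m` from polymer `p₁` to polymer `p₂` by
breaking all of `m`'s binding edges (all lying inside `p₁`, the component of `m` in `β`)
and forming an equal number of binding edges with monomers of a different polymer `p₂`
leaves the enthalpy (number of binding edges) unchanged, and changes the entropy (number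
of connected components) by at most `1` in absolute value, provided `p₁` remains
connected after removing `m`. -/
theorem tbn_move_monomer_enthalpy_entropy
    {V : Type*} [Fintype V] [DecidableEq V]
    (Gβ Gα : SimpleGraph V) [DecidableRel Gβ.Adj] [DecidableRel Gα.Adj]
    [Fintype Gβ.ConnectedComponent] [Fintype Gα.ConnectedComponent]
    (m : V)
    -- away from m the two configurations agree
    (hsame : ∀ x y : V, x ≠ m → y ≠ m → (Gα.Adj x y ↔ Gβ.Adj x y))
    -- the number k of broken edges equals the number of new edges
    (hk : (Gβ.neighborFinset m).card = (Gα.neighborFinset m).card)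
    -- all new edges go to monomers of a single polymer p₂ of β, different from m's polymer p₁
    (hp₂ : ∃ p₂ : Gβ.ConnectedComponent, p₂ ≠ Gβ.connectedComponentMk m ∧
      ∀ x : V, Gα.Adj m x → Gβ.connectedComponentMk x = p₂)
    -- p₁ remains connected after removing m
    (hconn : (Gβ.induce {x : V | Gβ.connectedComponentMk x = Gβ.connectedComponentMk m ∧ x ≠ m}).Preconnected) :
    Gα.edgeFinset.card = Gβ.edgeFinset.card ∧
    |(Fintype.card Gα.ConnectedComponent : ℤ) - (Fintype.card Gβ.ConnectedComponent : ℤ)| ≤ 1 := by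
  obtain ⟨p₂, -, hp₂⟩ := hp₂
  have hαβ x y hx hy := (hsame x y hx hy).mp
  have hβα x y hx hy := (hsame x y hx hy).mpr
  obtain ⟨p₁, hp₁⟩ := exists_forall_adj_connectedComponentMk_eq m hconn hβα
  have hα := card_connectedComponent_le_card_add_one m p₁ hβα hp₁
  have hβ := card_connectedComponent_le_card_add_one m p₂ hαβ hp₂
  refine ⟨card_edgeFinset_eq_of_adj_iff_of_degree_eq m hsame hk.symm, abs_le.mpr ⟨?_, ?_⟩⟩ <;>
    omega
end

section
/- Suppose every monomer type in a collection is either a 'cap' type or a 'body' type, every binding edge in every saturated configuration joins a body monomer to a cap monomer or a body monomer to a body monomer with at least one endpoint adjacent (through body monomers) to a cap or seed monomer, and in fact every polymer of a saturated configuration containing a body monomer contains a cap monomer or a seed monomer. Then the entropy of any saturated configuration is at most (number of seed monomers) + (number of cap monomers). -/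
namespace SimpleGraph

theorem card_connectedComponent_le_of_forall_reachable {V : Type*} {G : SimpleGraph V}
    [Fintype G.ConnectedComponent] (S : Finset V) (hS : ∀ v, ∃ w ∈ S, G.Reachable v w) :
    Fintype.card G.ConnectedComponent ≤ S.card := by
  have hsurj : Function.Surjective fun w : S => G.connectedComponentMk w := fun c =>
    c.ind fun v =>
      let ⟨w, hw, hvw⟩ := hS v
      ⟨⟨w, hw⟩, ConnectedComponent.eq.mpr hvw.symm⟩
  simpa using Fintype.card_le_of_surjective _ hsurj

end SimpleGraph

theorem tbn_saturated_entropy_le_seed_add_cap_general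
    {V : Type*} [DecidableEq V]
    (G : SimpleGraph V) [Fintype G.ConnectedComponent]
    (Seed Cap Body : Finset V)
    (hcover : ∀ v : V, v ∈ Seed ∨ v ∈ Cap ∨ v ∈ Body)
    (hanchor : ∀ v ∈ Body, ∃ w : V, (w ∈ Seed ∨ w ∈ Cap) ∧ G.Reachable v w) :
    Fintype.card G.ConnectedComponent ≤ Seed.card + Cap.card := by
  have hanchored : ∀ v, ∃ w ∈ Seed ∪ Cap, G.Reachable v w := by
    intro v
    rcases hcover v with hv | hv | hv
    · exact ⟨v, Finset.mem_union_left _ hv, .refl v⟩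
    · exact ⟨v, Finset.mem_union_right _ hv, .refl v⟩
    · obtain ⟨w, hw, hvw⟩ := hanchor v hv
      exact ⟨w, Finset.mem_union.mpr hw, hvw⟩
  calc Fintype.card G.ConnectedComponent ≤ (Seed ∪ Cap).card :=
        G.card_connectedComponent_le_of_forall_reachable _ hanchored
    _ ≤ Seed.card + Cap.card := Finset.card_union_le _ _

/-- Suppose the monomers of a configuration (modeled as a graph `G` whose
vertices are the monomers and whose components are the polymers) are partitioned into
seed, cap and body monomers, and, in the given saturated configuration, every polymer
containing a body monomer contains a cap monomer or a seed monomer.  Then the entropy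
(number of polymers) is at most (number of seed monomers) + (number of cap monomers). -/
theorem tbn_saturated_entropy_le_seed_add_cap
    {V : Type*} [Fintype V] [DecidableEq V]
    (G : SimpleGraph V) [DecidableRel G.Adj] [Fintype G.ConnectedComponent]
    (Seed Cap Body : Finset V)
    (hcover : ∀ v : V, v ∈ Seed ∨ v ∈ Cap ∨ v ∈ Body)
    (hSC : Disjoint Seed Cap) (hSB : Disjoint Seed Body) (hCB : Disjoint Cap Body)
    (hanchor : ∀ v ∈ Body, ∃ w : V, (w ∈ Seed ∨ w ∈ Cap) ∧ G.Reachable v w) :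
    Fintype.card G.ConnectedComponent ≤ Seed.card + Cap.card :=
  tbn_saturated_entropy_le_seed_add_cap_general G Seed Cap Body hcover hanchor
end
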